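/- Let g_A be a Lie algebroid over a local noetherian k-algebra A and M a g_A-module of finite type over A. Then: (1) if I is a defining ideal for the g_A-module A, then I is a defining ideal for M; (2) if I is a defining ideal for M, then ℓ_{g_A}(M/I^{n+1}M) < ∞ for every integer n ≥ 0. -/

import Mathlib

/-!
Let `P` be the largest proper invariant ideal of `A`, which exists because `A` is local. In
characteristic zero the radical of an invariant ideal is invariant, so `P` is radical, and then
prime. Every invariant submodule `N` of `M` is `P`-saturated: the conductor of `N` in its
saturation is an invariant ideal not contained in `P`, hence the unit ideal. So a chain of
invariant submodules between `P • X` and `X` gives a linearly independent family of `X / P X`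
over `A / P`, and by modularity the invariant submodules containing `P ^ e • M` have finite
length.

Conversely, if `ℓ(M / I M) < ∞` the chain `P ^ i • M + I • M` stabilises, and Nakayama gives
`P ^ i • M ≤ I • M`. Both parts follow, the first by applying this to the module `A` itself.
-/

open IsLocalRing

universe u v w

/-- A Lie algebroid over `R/k`. -/
structure LieAlgebroid (k : Type u) (A : Type v) (g : Type w) [CommRing k] [CommRing A]
    [Algebra k A] [LieRing g] [LieAlgebra k g] [Module A g] [IsScalarTower k A g] where
  anchor : g →ₗ[A] Derivation k A A
  anchor_bracket : ∀ x y : g, anchor ⁅x, y⁆ = ⁅anchor x, anchor y⁆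
  leibniz : ∀ (x y : g) (r : A), ⁅x, r • y⁆ = anchor x r • y + r • ⁅x, y⁆

namespace LieAlgebroid

variable {k : Type u} {A : Type v} {g : Type w} [CommRing k] [CommRing A]
    [Algebra k A] [LieRing g] [LieAlgebra k g] [Module A g] [IsScalarTower k A g]

/-- A `g`-invariant ideal. -/
def InvariantIdeal (L : LieAlgebroid k A g) (I : Ideal A) : Prop :=
  ∀ x : g, ∀ a ∈ I, L.anchor x a ∈ I

/-- The base ring is simple over the Lie algebroid. -/
def IsSimpleBase (L : LieAlgebroid k A g) : Prop :=
  ∀ I : Ideal A, L.InvariantIdeal I → I = ⊥ ∨ I = ⊤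

/-- Modules over a Lie algebroid. -/
structure AlgebroidModule (L : LieAlgebroid k A g) (M : Type*) [AddCommGroup M]
    [Module A M] : Type _ where
  ρ : g → M → M
  ρ_add_left : ∀ x y m, ρ (x + y) m = ρ x m + ρ y m
  ρ_smul_left : ∀ (a : A) (x : g) (m : M), ρ (a • x) m = a • ρ x m
  ρ_add : ∀ x m m', ρ x (m + m') = ρ x m + ρ x m'
  ρ_bracket : ∀ x y m, ρ ⁅x, y⁆ m = ρ x (ρ y m) - ρ y (ρ x m)
  ρ_leibniz : ∀ (x : g) (r : A) (m : M), ρ x (r • m) = L.anchor x r • m + r • ρ x m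

variable {L : LieAlgebroid k A g} {M : Type*} [AddCommGroup M] [Module A M]

/-- A `g`-invariant `A`-submodule. -/
def AlgebroidModule.Invariant (σ : AlgebroidModule L M) (N : Submodule A M) : Prop :=
  ∀ x : g, ∀ m ∈ N, σ.ρ x m ∈ N

/-- The length `ℓ_{g_R}(M)` in the lattice of `g_R`-submodules. -/
noncomputable def AlgebroidModule.length (σ : AlgebroidModule L M) : WithBot ℕ∞ :=
  Order.krullDim {N : Submodule A M // σ.Invariant N}

/-- The length `ℓ_{g_k}(k ⊗ M)` of the fibre of `M` over the fibre Lie algebra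
`g_k = k ⊗ ker(anchor)`, computed via the lattice of submodules of `M` containing `m_A·M`
which are invariant under the kernel of the anchor. -/
noncomputable def AlgebroidModule.fibreLength [IsLocalRing A] (σ : AlgebroidModule L M) :
    WithBot ℕ∞ :=
  Order.krullDim {N : Submodule A M //
    (maximalIdeal A) • (⊤ : Submodule A M) ≤ N ∧
    ∀ x : g, L.anchor x = 0 → ∀ m ∈ N, σ.ρ x m ∈ N}

/-- `M` is a local system over `g_R`: `ℓ_{g_R}(M) = ℓ_{g_k}(k ⊗ M)`. -/
def AlgebroidModule.IsLocalSystem [IsLocalRing A] (σ : AlgebroidModule L M) : Prop :=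
  σ.length = σ.fibreLength

end LieAlgebroid

namespace LieAlgebroid

variable {k : Type u} {A : Type v} {g : Type w} [CommRing k] [CommRing A]
    [Algebra k A] [LieRing g] [LieAlgebra k g] [Module A g] [IsScalarTower k A g]
variable {L : LieAlgebroid k A g} {M : Type*} [AddCommGroup M] [Module A M]

/-- `I` is an ideal of definition relative to the `g_A`-module `M`: a proper invariant ideal
with `ℓ_{g_A}(M/IM) < ∞` (computed via the lattice of invariant submodules containing `IM`). -/
def AlgebroidModule.IsDefiningIdeal (σ : AlgebroidModule L M) (I : Ideal A) : Prop :=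
  I ≠ ⊤ ∧ L.InvariantIdeal I ∧
    Order.krullDim {N : Submodule A M // I • (⊤ : Submodule A M) ≤ N ∧ σ.Invariant N} < ⊤

/-- `I` is an ideal of definition relative to the `g_A`-module `A`. -/
def IsDefiningIdeal (L : LieAlgebroid k A g) (I : Ideal A) : Prop :=
  I ≠ ⊤ ∧ L.InvariantIdeal I ∧
    Order.krullDim {J : Ideal A // I ≤ J ∧ L.InvariantIdeal J} < ⊤

end LieAlgebroid

open LieAlgebroid


namespace Order

variable {α : Type*}

theorem exists_le_natCast_of_krullDim_lt_top [Preorder α] (h : krullDim α < ⊤) :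
    ∃ n : ℕ, krullDim α ≤ n := by
  induction h' : krullDim α using WithBot.recBotCoe with
  | bot => exact ⟨0, bot_le⟩
  | coe e =>
    lift e to ℕ using fun he => by simp [h', he] at h
    exact ⟨e, le_rfl⟩

theorem krullDim_subtype_mono [Preorder α] {P Q : α → Prop} (h : ∀ x, P x → Q x) :
    krullDim {x // P x} ≤ krullDim {x // Q x} :=
  krullDim_le_of_strictMono (fun x => ⟨x.1, h x.1 x.2⟩) fun _ _ hxy => hxy

theorem exists_succ_eq_of_antitone [PartialOrder α] (h : krullDim α < ⊤) {f : ℕ → α}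
    (hf : Antitone f) : ∃ i, f (i + 1) = f i := by
  by_contra! hne
  have hanti : StrictAnti f := strictAnti_nat_of_succ_lt fun i => (hf i.le_succ).lt_of_ne (hne i)
  have := krullDim_le_of_strictMono _ hanti.dual_left
  rw [krullDim_orderDual, krullDim_nat, top_le_iff] at this
  exact h.ne this

theorem krullDim_subtype_lt_top_of_sup_inf [Lattice α] [IsModularLattice α] {P Q R : α → Prop}
    (X : α) (hQ : krullDim {x // Q x} < ⊤) (hR : krullDim {x // R x} < ⊤)
    (hPQ : ∀ x, P x → Q (x ⊔ X)) (hPR : ∀ x, P x → R (x ⊓ X)) :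
    krullDim {x // P x} < ⊤ := by
  obtain ⟨m, hm⟩ := exists_le_natCast_of_krullDim_lt_top hR
  obtain ⟨n, hn⟩ := exists_le_natCast_of_krullDim_lt_top hQ
  let f : {x // P x} → {x // Q x} := fun x => ⟨x.1 ⊔ X, hPQ x.1 x.2⟩
  have hf : Monotone f := fun x y hxy => sup_le_sup_right (α := α) hxy X
  -- on a fibre of `x ↦ x ⊔ X`, modularity makes `x ↦ x ⊓ X` strictly monotone
  have hfibre (y : {x // Q x}) : krullDim (f ⁻¹' {y}) ≤ m := by
    refine (krullDim_le_of_strictMono (fun x => (⟨x.1.1 ⊓ X, hPR _ x.1.2⟩ : {x // R x}))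
      fun a b hab => ?_).trans hm
    have hle : a.1.1 ≤ b.1.1 := hab.le
    have hsup : a.1.1 ⊔ X = b.1.1 ⊔ X := congrArg Subtype.val (a.2.trans b.2.symm)
    refine (inf_le_inf_right X hle).lt_of_ne fun hinf => hab.ne ?_
    exact Subtype.ext (Subtype.ext (eq_of_le_of_inf_le_of_sup_le hle hinf.ge hsup.ge))
  calc krullDim {x // P x} ≤ (m + 1) * krullDim {x // Q x} + m :=
        krullDim_le_of_krullDim_preimage_le' f hf hfibre
    _ ≤ (m + 1) * n + m := by gcongr
    _ < ⊤ := by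
        rw [show ((m : WithBot ℕ∞) + 1) * n + m = (((m + 1) * n + m : ℕ) : ℕ∞) by push_cast; rfl]
        exact WithBot.coe_lt_coe.mpr (ENat.natCast_lt_top _)

end Order

namespace Derivation

variable {k A : Type*} [CommRing A]

theorem mapsTo_radical [Field k] [CharZero k] [Algebra k A] (D : Derivation k A A) {q : Ideal A}
    (hq : Set.MapsTo D q q) : Set.MapsTo D q.radical q.radical := by
  have hunit (m : ℕ) : IsUnit ((m + 1 : ℕ) : A) := by
    simpa using (isUnit_iff_ne_zero.mpr (Nat.cast_add_one_ne_zero (R := k) m)).map (algebraMap k A)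
  rintro a ⟨n, ha⟩
  have ha' : a ^ (n + 1) ∈ q := by rw [pow_succ]; exact q.mul_mem_right a ha
  -- each derivation trades one power of `a` for two powers of `D a`
  have key : ∀ j m, m + j = n → a ^ m * D a ^ (2 * j + 1) ∈ q := by
    intro j
    induction j with
    | zero =>
      intro m hm
      rw [add_zero] at hm
      subst hm
      have h := hq ha'
      rw [Derivation.leibniz_pow, nsmul_eq_mul, smul_eq_mul, add_tsub_cancel_right] at h
      simpa using (Ideal.unit_mul_mem_iff_mem q (hunit m)).mp h
    | succ j ih =>
      rintro m rfl
      have h₀ := ih (m + 1) (by ring)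
      have h₁ := hq h₀
      have hid : ((m + 1 : ℕ) : A) * (a ^ m * D a ^ (2 * (j + 1) + 1)) =
          D a * D (a ^ (m + 1) * D a ^ (2 * j + 1)) -
            ((2 * j + 1 : ℕ) : A) * D (D a) * (a ^ (m + 1) * D a ^ (2 * j + 1)) := by
        simp only [Derivation.leibniz, Derivation.leibniz_pow, smul_eq_mul, nsmul_eq_mul,
          add_tsub_cancel_right]
        push_cast
        ring
      refine (Ideal.unit_mul_mem_iff_mem q (hunit m)).mp ?_
      rw [hid]
      exact q.sub_mem (q.mul_mem_left _ h₁) (q.mul_mem_left _ h₀)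
  exact ⟨2 * n + 1, by simpa using key n 0 (zero_add n)⟩

theorem mapsTo_colon_singleton {R : Type*} [CommSemiring R] [Algebra R A] (D : Derivation R A A)
    {p : Ideal A} (hrad : p.IsRadical) (hp : Set.MapsTo D p p) (a : A) :
    Set.MapsTo D (p.colon {a}) (p.colon {a}) := by
  intro c hc
  simp only [SetLike.mem_coe, Submodule.mem_colon_singleton, smul_eq_mul] at hc ⊢
  have hsq : (D c * a) ^ 2 = D (c * a) * (D c * a) - c * a * (D c * D a) := by
    rw [Derivation.leibniz]; simp only [smul_eq_mul]; ring
  refine hrad ⟨2, ?_⟩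
  rw [hsq]
  exact p.sub_mem (p.mul_mem_right _ (hp hc)) (p.mul_mem_right _ hc)

end Derivation

namespace Submodule

variable {A M : Type*} [CommRing A] [AddCommGroup M] [Module A M]

def saturation (S : Submonoid A) (N : Submodule A M) : Submodule A M where
  carrier := {m | ∃ s ∈ S, s • m ∈ N}
  zero_mem' := ⟨1, S.one_mem, by simp⟩
  add_mem' := by
    rintro m m' ⟨s, hs, hm⟩ ⟨s', hs', hm'⟩
    refine ⟨s * s', S.mul_mem hs hs', ?_⟩
    rw [smul_add, mul_comm, mul_smul, mul_comm, mul_smul]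
    exact N.add_mem (N.smul_mem _ hm) (N.smul_mem _ hm')
  smul_mem' := by
    rintro r m ⟨s, hs, hm⟩
    exact ⟨s, hs, by rw [smul_comm]; exact N.smul_mem r hm⟩

theorem exists_mem_colon_saturation (S : Submonoid A) (N : Submodule A M)
    (hfg : (N.saturation S).FG) : ∃ s ∈ S, s ∈ N.colon (N.saturation S : Set M) := by
  suffices ∀ T : Submodule A M, T.FG → T ≤ N.saturation S → ∃ s ∈ S, s ∈ N.colon (T : Set M) from
    this _ hfg le_rfl
  intro T hT
  induction T, hT using Submodule.fg_induction with
  | singleton x =>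
    intro hx
    obtain ⟨s, hs, hsx⟩ := hx (mem_span_singleton_self x)
    refine ⟨s, hs, mem_colon.mpr fun y hy => ?_⟩
    obtain ⟨r, rfl⟩ := mem_span_singleton.mp hy
    rw [smul_comm]
    exact N.smul_mem r hsx
  | sup T₁ T₂ _ _ ih₁ ih₂ =>
    intro hT
    obtain ⟨s₁, hs₁, h₁⟩ := ih₁ (le_sup_left.trans hT)
    obtain ⟨s₂, hs₂, h₂⟩ := ih₂ (le_sup_right.trans hT)
    refine ⟨s₁ * s₂, S.mul_mem hs₁ hs₂, mem_colon.mpr fun y hy => ?_⟩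
    obtain ⟨y₁, hy₁, y₂, hy₂, rfl⟩ := mem_sup.mp hy
    rw [smul_add, mul_comm, mul_smul, mul_comm, mul_smul]
    exact N.add_mem (N.smul_mem _ (mem_colon.mp h₁ y₁ hy₁)) (N.smul_mem _ (mem_colon.mp h₂ y₂ hy₂))

theorem pow_smul_top_le_pow_smul_top {I J : Ideal A} (h : J • (⊤ : Submodule A M) ≤ I • ⊤)
    (n : ℕ) : J ^ n • (⊤ : Submodule A M) ≤ I ^ n • ⊤ := by
  induction n with
  | zero => simp
  | succ n ih =>
    calc J ^ (n + 1) • (⊤ : Submodule A M) = J ^ n • J • ⊤ := by rw [pow_succ, mul_smul]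
      _ ≤ J ^ n • I • ⊤ := smul_mono_right _ h
      _ = I • J ^ n • ⊤ := smul_comm _ _ _
      _ ≤ I • I ^ n • ⊤ := smul_mono_right _ ih
      _ = I ^ (n + 1) • ⊤ := by rw [pow_succ', mul_smul]

/-- Between `p • X` and `X`, a strict chain of `p`-saturated submodules gives a family in
`X ⧸ p • X` that is linearly independent over `A ⧸ p`. -/
theorem krullDim_saturated_le_finrank (p : Ideal A) [p.IsPrime] (X : Submodule A M)
    [Module.Finite A X] :
    Order.krullDim {N : Submodule A M //
        p • X ≤ N ∧ N ≤ X ∧ ∀ s ∉ p, ∀ m : M, s • m ∈ N → m ∈ N} ≤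
      Module.finrank (A ⧸ p) (X ⧸ p • (⊤ : Submodule A X)) := by
  refine iSup_le fun c => ?_
  have hstep (i : Fin c.length) :
      ∃ x : X, (x : M) ∈ (c i.succ).1 ∧ (x : M) ∉ (c i.castSucc).1 := by
    obtain ⟨m, hm, hm'⟩ := SetLike.exists_of_lt
      (Subtype.coe_lt_coe.mpr (c.strictMono (Fin.castSucc_lt_succ (i := i))))
    exact ⟨⟨m, (c i.succ).2.2.1 hm⟩, hm, hm'⟩
  choose x hx hx' using hstep
  have hli : LinearIndependent (A ⧸ p)
      fun i => Submodule.Quotient.mk (p := p • (⊤ : Submodule A X)) (x i) := by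
    classical
    refine Fintype.linearIndependent_iff.mpr fun g hg => ?_
    by_contra! hne
    obtain ⟨i₀, hi₀, hmax⟩ := (Finset.univ.filter (g · ≠ 0)).exists_max_image id
      (by simpa [Finset.filter_nonempty_iff] using hne)
    choose d hd using fun i => Ideal.Quotient.mk_surjective (g i)
    have hsum : ∑ i, d i • (x i : M) ∈ p • X := by
      have hzero : Submodule.Quotient.mk (p := p • (⊤ : Submodule A X)) (∑ i, d i • x i) = 0 := by
        rw [← hg, ← Submodule.mkQ_apply, map_sum]
        simp only [← hd, Module.Quotient.mk_smul_mk, Submodule.mkQ_apply]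
      simpa using (mem_smul_top_iff _ _ _).mp ((Submodule.Quotient.mk_eq_zero _).mp hzero)
    have hbelow : ∀ i ∈ Finset.univ.erase i₀, d i • (x i : M) ∈ (c i₀.castSucc).1 := by
      intro i hi
      rcases (Finset.ne_of_mem_erase hi).lt_or_gt with hlt | hgt
      · exact smul_mem _ _ (c.monotone (Fin.succ_le_castSucc_iff.mpr hlt) (hx i))
      · have hdi : d i ∈ p := by
          rw [← Ideal.Quotient.eq_zero_iff_mem, hd]
          by_contra hgi
          exact hgt.not_ge (hmax i (by simpa using hgi))
        exact (c i₀.castSucc).2.1 (smul_mem_smul hdi (x i).2)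
    have hdi₀ : d i₀ ∉ p := by
      rw [← Ideal.Quotient.eq_zero_iff_mem, hd]
      simpa using hi₀
    refine hx' i₀ ((c i₀.castSucc).2.2.2 _ hdi₀ _ ?_)
    rw [← Finset.add_sum_erase _ _ (Finset.mem_univ i₀)] at hsum
    simpa using sub_mem ((c i₀.castSucc).2.1 hsum) (sum_mem hbelow)
  exact_mod_cast (by simpa using hli.fintype_card_le_finrank : c.length ≤ _)

end Submodule

namespace LieAlgebroid

variable {k : Type u} {A : Type v} {g : Type w}

section CommRing

variable [CommRing k] [CommRing A] [Algebra k A] [LieRing g] [LieAlgebra k g] [Module A g]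
  [IsScalarTower k A g] {L : LieAlgebroid k A g}

theorem InvariantIdeal.sSup {S : Set (Ideal A)} (hS : ∀ q ∈ S, L.InvariantIdeal q) :
    L.InvariantIdeal (sSup S) := by
  intro x a ha
  rw [sSup_eq_iSup'] at ha ⊢
  refine Submodule.iSup_induction _ (motive := fun a => L.anchor x a ∈ _) ha
    (fun q a ha => Submodule.mem_iSup_of_mem q (hS q q.2 x a ha)) (by simp) fun a b ha hb => ?_
  simpa using add_mem ha hb

def maxInvariantIdeal (L : LieAlgebroid k A g) : Ideal A :=
  sSup {q | L.InvariantIdeal q ∧ q ≠ ⊤}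

theorem le_maxInvariantIdeal {q : Ideal A} (hq : L.InvariantIdeal q) (hq' : q ≠ ⊤) :
    q ≤ L.maxInvariantIdeal :=
  le_sSup ⟨hq, hq'⟩

theorem invariantIdeal_maxInvariantIdeal : L.InvariantIdeal L.maxInvariantIdeal :=
  InvariantIdeal.sSup fun _ hq => hq.1

theorem maxInvariantIdeal_ne_top [IsLocalRing A] : L.maxInvariantIdeal ≠ ⊤ :=
  ne_top_of_le_ne_top (maximalIdeal.isMaximal A).ne_top (sSup_le fun _ hq => le_maximalIdeal hq.2)

def baseModule (L : LieAlgebroid k A g) : AlgebroidModule L A where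
  ρ x a := L.anchor x a
  ρ_add_left x y a := by simp
  ρ_smul_left r x a := by simp
  ρ_add x a b := by simp
  ρ_bracket x y a := by simp [L.anchor_bracket, Derivation.commutator_apply]
  ρ_leibniz x r a := by simp [Derivation.leibniz, add_comm, mul_comm]

theorem krullDim_baseModule (I : Ideal A) :
    Order.krullDim {N : Submodule A A // I • ⊤ ≤ N ∧ L.baseModule.Invariant N} =
      Order.krullDim {J : Ideal A // I ≤ J ∧ L.InvariantIdeal J} := by
  rw [show I • (⊤ : Submodule A A) = I by simp]
  rfl

namespace AlgebroidModule

variable {M : Type*} [AddCommGroup M] [Module A M] (σ : AlgebroidModule L M)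

theorem invariant_top : σ.Invariant ⊤ := fun _ _ _ => trivial

variable {σ}

theorem Invariant.sup {N N' : Submodule A M} (hN : σ.Invariant N) (hN' : σ.Invariant N') :
    σ.Invariant (N ⊔ N') := by
  intro x m hm
  obtain ⟨n, hn, n', hn', rfl⟩ := Submodule.mem_sup.mp hm
  rw [σ.ρ_add]
  exact Submodule.add_mem_sup (hN x n hn) (hN' x n' hn')

theorem Invariant.inf {N N' : Submodule A M} (hN : σ.Invariant N) (hN' : σ.Invariant N') :
    σ.Invariant (N ⊓ N') :=
  fun x m hm => ⟨hN x m hm.1, hN' x m hm.2⟩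

theorem Invariant.smul {q : Ideal A} {N : Submodule A M} (hq : L.InvariantIdeal q)
    (hN : σ.Invariant N) : σ.Invariant (q • N) := by
  intro x m hm
  refine Submodule.smul_induction_on hm (fun r hr n hn => ?_) fun m m' hm hm' => ?_
  · rw [σ.ρ_leibniz]
    exact add_mem (Submodule.smul_mem_smul (hq x r hr) hn) (Submodule.smul_mem_smul hr (hN x n hn))
  · rw [σ.ρ_add]
    exact add_mem hm hm'

theorem invariant_pow_smul_top {q : Ideal A} (hq : L.InvariantIdeal q) (n : ℕ) :
    σ.Invariant (q ^ n • ⊤) := by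
  induction n with
  | zero => simpa using σ.invariant_top
  | succ n ih => rw [pow_succ', mul_smul]; exact ih.smul hq

theorem invariantIdeal_colon {N N' : Submodule A M} (hN : σ.Invariant N)
    (hN' : σ.Invariant N') : L.InvariantIdeal (N.colon (N' : Set M)) := by
  intro x a ha
  rw [Submodule.mem_colon] at ha ⊢
  intro m hm
  rw [eq_sub_of_add_eq (σ.ρ_leibniz x a m).symm]
  exact sub_mem (hN x _ (ha m hm)) (ha _ (hN' x m hm))

theorem Invariant.saturation {N : Submodule A M} (hN : σ.Invariant N) (S : Submonoid A) :
    σ.Invariant (N.saturation S) := by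
  rintro x m ⟨s, hs, hsm⟩
  refine ⟨s * s, S.mul_mem hs hs, ?_⟩
  have h : (s * s) • σ.ρ x m = s • σ.ρ x (s • m) - L.anchor x s • (s • m) := by
    rw [σ.ρ_leibniz, smul_add, smul_comm s (L.anchor x s) m, mul_smul]
    abel
  rw [h]
  exact sub_mem (N.smul_mem s (hN x _ hsm)) (N.smul_mem _ hsm)

theorem exists_pow_smul_top_le [IsLocalRing A] [IsNoetherianRing A] [Module.Finite A M]
    {I q : Ideal A} (hI : L.InvariantIdeal I)
    (hfin : Order.krullDim {N : Submodule A M // I • ⊤ ≤ N ∧ σ.Invariant N} < ⊤)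
    (hq : L.InvariantIdeal q) (hq' : q ≠ ⊤) : ∃ i, q ^ i • (⊤ : Submodule A M) ≤ I • ⊤ := by
  obtain ⟨i, hi⟩ := Order.exists_succ_eq_of_antitone hfin
    (f := fun i => ⟨q ^ i • ⊤ ⊔ I • ⊤, le_sup_right,
      (invariant_pow_smul_top hq i).sup ((invariant_top σ).smul hI)⟩)
    fun i j hij => Subtype.mk_le_mk.mpr
      (sup_le_sup_right (Submodule.smul_mono_left (Ideal.pow_le_pow_right hij)) _)
  refine ⟨i, Submodule.le_of_le_smul_of_le_jacobson_bot (IsNoetherian.noetherian _)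
    ((le_maximalIdeal hq').trans (maximalIdeal_le_jacobson _)) ?_⟩
  calc q ^ i • (⊤ : Submodule A M) ≤ q ^ i • ⊤ ⊔ I • ⊤ := le_sup_left
    _ = q ^ (i + 1) • ⊤ ⊔ I • ⊤ := (congrArg Subtype.val hi).symm
    _ = I • ⊤ ⊔ q • q ^ i • ⊤ := by rw [pow_succ', mul_smul, sup_comm]

end AlgebroidModule

end CommRing

section CharZero

variable [Field k] [CharZero k] [CommRing A] [Algebra k A] [LieRing g] [LieAlgebra k g]
  [Module A g] [IsScalarTower k A g] {L : LieAlgebroid k A g}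

/-- `maxInvariantIdeal` is radical by `Derivation.mapsTo_radical`; then for `a * b ∈ P` with
`b ∉ P` the invariant ideal `P : a` is not below `P`, so it is `⊤`. -/
theorem maxInvariantIdeal_isPrime [IsLocalRing A] : L.maxInvariantIdeal.IsPrime := by
  have hinv : L.InvariantIdeal L.maxInvariantIdeal := invariantIdeal_maxInvariantIdeal
  have hrad : L.maxInvariantIdeal.IsRadical :=
    le_maxInvariantIdeal (fun x _ ha => (L.anchor x).mapsTo_radical (fun _ hb => hinv x _ hb) ha)
      (Ideal.radical_eq_top.not.mpr maxInvariantIdeal_ne_top)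
  refine ⟨maxInvariantIdeal_ne_top, fun {a b} hab => or_iff_not_imp_right.mpr fun hb => ?_⟩
  have hcolon : L.maxInvariantIdeal.colon {a} = ⊤ := by
    by_contra hne
    refine hb (le_maxInvariantIdeal (fun x _ hc => ?_) hne ?_)
    · exact (L.anchor x).mapsTo_colon_singleton hrad (fun _ hd => hinv x _ hd) a hc
    · rwa [Submodule.mem_colon_singleton, smul_eq_mul, mul_comm]
  simpa using (hcolon ▸ Submodule.mem_top : (1 : A) ∈ L.maxInvariantIdeal.colon {a})

namespace AlgebroidModule

variable [IsLocalRing A] [IsNoetherianRing A] {M : Type*} [AddCommGroup M] [Module A M]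
  [Module.Finite A M] {σ : AlgebroidModule L M}

theorem Invariant.mem_of_smul_mem {N : Submodule A M} (hN : σ.Invariant N) {s : A}
    (hs : s ∉ L.maxInvariantIdeal) {m : M} (hm : s • m ∈ N) : m ∈ N := by
  have := maxInvariantIdeal_isPrime (L := L)
  set S := L.maxInvariantIdeal.primeCompl
  obtain ⟨s₀, hs₀, hcolon⟩ := N.exists_mem_colon_saturation S (IsNoetherian.noetherian _)
  have htop : N.colon (N.saturation S : Set M) = ⊤ := by
    by_contra hne
    exact hs₀ (le_maxInvariantIdeal (invariantIdeal_colon hN (hN.saturation S)) hne hcolon)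
  have hm' : m ∈ N.saturation S := ⟨s, hs, hm⟩
  simpa using Submodule.mem_colon.mp (htop ▸ Submodule.mem_top : (1 : A) ∈ _) m hm'

variable (σ) in
theorem krullDim_pow_smul_top_lt_top (e : ℕ) :
    Order.krullDim {N : Submodule A M //
      L.maxInvariantIdeal ^ e • ⊤ ≤ N ∧ σ.Invariant N} < ⊤ := by
  induction e with
  | zero =>
    have hN (N : {N : Submodule A M // L.maxInvariantIdeal ^ 0 • ⊤ ≤ N ∧ σ.Invariant N}) :
        N.1 = ⊤ := top_le_iff.mp (by simpa using N.2.1)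
    have : Subsingleton {N : Submodule A M // L.maxInvariantIdeal ^ 0 • ⊤ ≤ N ∧ σ.Invariant N} :=
      ⟨fun N N' => Subtype.ext ((hN N).trans (hN N').symm)⟩
    exact Order.krullDim_nonpos_of_subsingleton.trans_lt (by decide)
  | succ e ih =>
    have := maxInvariantIdeal_isPrime (L := L)
    set X : Submodule A M := L.maxInvariantIdeal ^ e • ⊤
    have hX : σ.Invariant X := invariant_pow_smul_top invariantIdeal_maxInvariantIdeal e
    refine Order.krullDim_subtype_lt_top_of_sup_inf X ih
      ((Submodule.krullDim_saturated_le_finrank _ X).trans_lt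
        (WithBot.coe_lt_coe.mpr (ENat.natCast_lt_top _)))
      (fun N hN => ⟨le_sup_right, hN.2.sup hX⟩)
      (fun N hN => ⟨le_inf ?_ Submodule.smul_le_right, inf_le_right,
        fun s hs m hm => (hN.2.inf hX).mem_of_smul_mem hs hm⟩)
    rw [← mul_smul, ← pow_succ']
    exact hN.1

theorem krullDim_lt_top_of_pow_smul_top_le {I : Ideal A} {e : ℕ}
    (h : L.maxInvariantIdeal ^ e • ⊤ ≤ I • (⊤ : Submodule A M)) :
    Order.krullDim {N : Submodule A M // I • ⊤ ≤ N ∧ σ.Invariant N} < ⊤ :=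
  (Order.krullDim_subtype_mono fun _ hN => ⟨h.trans hN.1, hN.2⟩).trans_lt
    (σ.krullDim_pow_smul_top_lt_top e)

end AlgebroidModule

end CharZero

end LieAlgebroid

theorem definingIdeal_props_general
    (k : Type u) (A : Type v) (g : Type w) [Field k] [CharZero k]
    [CommRing A] [IsLocalRing A] [IsNoetherianRing A] [Algebra k A]
    [LieRing g] [LieAlgebra k g] [Module A g] [IsScalarTower k A g]
    (L : LieAlgebroid k A g)
    (M : Type v) [AddCommGroup M] [Module A M] [Module.Finite A M]
    (σ : AlgebroidModule L M) (I : Ideal A) :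
    (L.IsDefiningIdeal I → σ.IsDefiningIdeal I) ∧
    (σ.IsDefiningIdeal I → ∀ n : ℕ,
      Order.krullDim {N : Submodule A M //
        I ^ (n + 1) • (⊤ : Submodule A M) ≤ N ∧ σ.Invariant N} < ⊤) := by
  have hP := invariantIdeal_maxInvariantIdeal (L := L)
  have hP' := maxInvariantIdeal_ne_top (L := L)
  constructor
  · rintro ⟨hI, hIinv, hfin⟩
    obtain ⟨i, hi⟩ := L.baseModule.exists_pow_smul_top_le hIinv
      ((krullDim_baseModule I).trans_lt hfin) hP hP'
    simp only [smul_eq_mul, Ideal.mul_top] at hi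
    exact ⟨hI, hIinv, σ.krullDim_lt_top_of_pow_smul_top_le (Submodule.smul_mono_left hi)⟩
  · rintro ⟨-, hIinv, hfin⟩ n
    obtain ⟨i, hi⟩ := σ.exists_pow_smul_top_le hIinv hfin hP hP'
    refine σ.krullDim_lt_top_of_pow_smul_top_le (e := i * (n + 1)) ?_
    rw [pow_mul]
    exact Submodule.pow_smul_top_le_pow_smul_top hi (n + 1)

/-- Let `g_A` be a Lie algebroid over a local noetherian `k`-algebra `A` and
`M` a `g_A`-module of finite type over `A`.  (1) If `I` is a defining ideal for the
`g_A`-module `A`, then `I` is a defining ideal for `M`.  (2) If `I` is a defining ideal for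
`M`, then `ℓ_{g_A}(M/I^{n+1}M) < ∞` for every `n ≥ 0`. -/
theorem definingIdeal_props
    (k : Type u) (A : Type v) (g : Type w) [Field k] [CharZero k] [IsAlgClosed k]
    [CommRing A] [IsLocalRing A] [IsNoetherianRing A] [Algebra k A]
    (hcoef : Function.Bijective (algebraMap k (ResidueField A)))
    [LieRing g] [LieAlgebra k g] [Module A g] [IsScalarTower k A g] [Module.Finite A g]
    (L : LieAlgebroid k A g)
    (M : Type v) [AddCommGroup M] [Module A M] [Module.Finite A M]
    (σ : AlgebroidModule L M) (I : Ideal A) :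
    (L.IsDefiningIdeal I → σ.IsDefiningIdeal I) ∧
    (σ.IsDefiningIdeal I → ∀ n : ℕ,
      Order.krullDim {N : Submodule A M //
        I ^ (n + 1) • (⊤ : Submodule A M) ≤ N ∧ σ.Invariant N} < ⊤) :=
  definingIdeal_props_general k A g L M σ I
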